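/- arXiv:1812.02497 — 4 statements merged into one kernel-verified Lean document; each statement's English description precedes it below -/
import Mathlib

section
/- The set scoring function F is monotonically non-decreasing on sets of cardinality at most M: if A ⊆ B ⊆ V are finite subsets with |B| ≤ M, then F(A) ≤ F(B). -/
open Finset

/- Adding the elements of `B \ A` raises the first sum of `F` by at least `|B \ A|`, since
every leverage score is nonnegative. Each new off-diagonal pair of `B` has a coordinate in
`B \ A`, so there are at most `2 |B \ A| |B|` of them, each carrying penalty at most
`α / (2M) ≤ 1 / (2M)`; as `|B| ≤ M`, the penalty grows by at most `|B \ A|`. -/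

theorem Finset.card_offDiag_sdiff_offDiag_le {α : Type*} [DecidableEq α] (s t : Finset α) :
    #(t.offDiag \ s.offDiag) ≤ 2 * #(t \ s) * #t := by
  have hsub : t.offDiag \ s.offDiag ⊆ (t \ s) ×ˢ t ∪ t ×ˢ (t \ s) := by
    intro p hp
    simp only [mem_sdiff, mem_offDiag, mem_union, mem_product] at hp ⊢
    tauto
  calc #(t.offDiag \ s.offDiag)
      ≤ #((t \ s) ×ˢ t ∪ t ×ˢ (t \ s)) := card_le_card hsub
    _ ≤ #((t \ s) ×ˢ t) + #(t ×ˢ (t \ s)) := card_union_le _ _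
    _ = 2 * #(t \ s) * #t := by rw [card_product, card_product]; ring

theorem div_mul_half_sum_offDiag_sdiff_le_card_sdiff {α : Type*} [DecidableEq α] {s t : Finset α}
    {c : ℝ} (hc : 0 < c) (hct : (#t : ℝ) ≤ c) {a : ℝ} (ha : a ≤ 1) {K : α → α → ℝ}
    (hK0 : ∀ i j, 0 ≤ K i j) (hK1 : ∀ i j, K i j ≤ 1) :
    (a / c) * ((∑ p ∈ t.offDiag \ s.offDiag, K p.1 p.2) / 2) ≤ #(t \ s) := by
  have hpair : ∑ p ∈ t.offDiag \ s.offDiag, a * K p.1 p.2 ≤ #(t.offDiag \ s.offDiag) := by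
    simpa using sum_le_card_nsmul _ _ (1 : ℝ) fun p _ => mul_le_one₀ ha (hK0 p.1 p.2) (hK1 p.1 p.2)
  have hcard : (#(t.offDiag \ s.offDiag) : ℝ) ≤ 2 * #(t \ s) * c := by
    calc (#(t.offDiag \ s.offDiag) : ℝ) ≤ 2 * #(t \ s) * #t := by
          exact_mod_cast card_offDiag_sdiff_offDiag_le s t
      _ ≤ 2 * #(t \ s) * c := by gcongr
  rw [← mul_sum] at hpair
  rw [div_mul_div_comm, div_le_iff₀ (by positivity)]
  linarith

theorem setScore_monotone_general {V : Type*} [DecidableEq V]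
    (ℓ : V → ℝ) (hℓ : ∀ i, 0 ≤ ℓ i) (K : V → V → ℝ)
    (hK0 : ∀ i j, 0 ≤ K i j) (hK1 : ∀ i j, K i j ≤ 1)
    (α M : ℝ) (hα1 : α ≤ 1) (hM : 0 < M)
    (F : Finset V → ℝ)
    (hF : ∀ S : Finset V,
      F S = (∑ i ∈ S, (ℓ i + 1)) - (α / M) * ((∑ p ∈ S.offDiag, K p.1 p.2) / 2))
    (A B : Finset V) (hAB : A ⊆ B) (hB : (B.card : ℝ) ≤ M) :
    F A ≤ F B := by
  have hgain : (#(B \ A) : ℝ) ≤ ∑ i ∈ B \ A, (ℓ i + 1) := by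
    simpa using card_nsmul_le_sum (B \ A) (fun i => ℓ i + 1) 1 fun i _ => by linarith [hℓ i]
  have hpenalty := div_mul_half_sum_offDiag_sdiff_le_card_sdiff (s := A) hM hB hα1 hK0 hK1
  rw [sum_sdiff_eq_sub hAB] at hgain
  rw [sum_sdiff_eq_sub (offDiag_mono hAB)] at hpenalty
  rw [hF A, hF B]
  linear_combination hgain + hpenalty

/-- **Monotonicity of the set scoring function on sets of size at most `M`.**
With nonnegative leverage scores `ℓ`, a symmetric kernel `K` with values in
`[0,1]`, `0 ≤ α ≤ 1`, `M > 0` and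
`F S = ∑_{i ∈ S} (ℓ i + 1) - (α/M) · ∑_{unordered pairs {i,j} ⊆ S, i ≠ j} K i j`
(the unordered-pair sum written as half the ordered off-diagonal sum, which
agrees since `K` is symmetric): if `A ⊆ B ⊆ V` and `|B| ≤ M`, then
`F A ≤ F B`. -/
theorem setScore_monotone {V : Type*} [Fintype V] [DecidableEq V]
    (ℓ : V → ℝ) (hℓ : ∀ i, 0 ≤ ℓ i) (K : V → V → ℝ)
    (hKsymm : ∀ i j, K i j = K j i)
    (hK0 : ∀ i j, 0 ≤ K i j) (hK1 : ∀ i j, K i j ≤ 1)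
    (α M : ℝ) (hα0 : 0 ≤ α) (hα1 : α ≤ 1) (hM : 0 < M)
    (F : Finset V → ℝ)
    (hF : ∀ S : Finset V,
      F S = (∑ i ∈ S, (ℓ i + 1)) - (α / M) * ((∑ p ∈ S.offDiag, K p.1 p.2) / 2))
    (A B : Finset V) (hAB : A ⊆ B) (hB : (B.card : ℝ) ≤ M) :
    F A ≤ F B :=
  setScore_monotone_general ℓ hℓ K hK0 hK1 α M hα1 hM F hF A B hAB hB
end

section
/- If A ⊆ B ⊆ V are finite subsets with |B| ≤ M, then F(A) − F(B) ≤ (|B| − |A|) · (α − 1); in particular F(A) − F(B) ≤ 0. -/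
/-- With nonnegative leverage scores `ℓ`, a symmetric kernel `K` with values in
`[0,1]`, `0 ≤ α ≤ 1`, `M > 0` and
`F S = ∑_{i ∈ S} (ℓ i + 1) - (α/M) · ∑_{unordered pairs {i,j} ⊆ S, i ≠ j} K i j`
(the unordered-pair sum written as half the ordered off-diagonal sum, which
agrees since `K` is symmetric): if `A ⊆ B ⊆ V` and `|B| ≤ M`, then
`F A − F B ≤ (|B| − |A|) · (α − 1)`, and in particular `F A − F B ≤ 0`. -/
theorem setScore_diff_bound {V : Type*} [Fintype V] [DecidableEq V]
    (ℓ : V → ℝ) (hℓ : ∀ i, 0 ≤ ℓ i) (K : V → V → ℝ)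
    (hKsymm : ∀ i j, K i j = K j i)
    (hK0 : ∀ i j, 0 ≤ K i j) (hK1 : ∀ i j, K i j ≤ 1)
    (α M : ℝ) (hα0 : 0 ≤ α) (hα1 : α ≤ 1) (hM : 0 < M)
    (F : Finset V → ℝ)
    (hF : ∀ S : Finset V,
      F S = (∑ i ∈ S, (ℓ i + 1)) - (α / M) * ((∑ p ∈ S.offDiag, K p.1 p.2) / 2))
    (A B : Finset V) (hAB : A ⊆ B) (hB : (B.card : ℝ) ≤ M) :
    F A - F B ≤ ((B.card : ℝ) - (A.card : ℝ)) * (α - 1) ∧ F A - F B ≤ 0 := by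
  have hcard : A.card ≤ B.card := Finset.card_le_card hAB
  have hsub : A.offDiag ⊆ B.offDiag := by
    intro p hp
    simp only [Finset.mem_offDiag] at hp ⊢
    exact ⟨hAB hp.1, hAB hp.2.1, hp.2.2⟩
  -- sum over B splits
  have hsum1 : ∑ i ∈ B \ A, (ℓ i + 1) + ∑ i ∈ A, (ℓ i + 1) = ∑ i ∈ B, (ℓ i + 1) :=
    Finset.sum_sdiff hAB
  have h1 : (B.card : ℝ) - A.card ≤ ∑ i ∈ B \ A, (ℓ i + 1) := by
    have : ((B \ A).card : ℝ) ≤ ∑ i ∈ B \ A, (ℓ i + 1) := by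
      calc ((B \ A).card : ℝ) = ∑ _i ∈ B \ A, (1 : ℝ) := by simp
        _ ≤ ∑ i ∈ B \ A, (ℓ i + 1) := Finset.sum_le_sum (fun i _ => by linarith [hℓ i])
    rwa [Finset.card_sdiff_of_subset hAB, Nat.cast_sub hcard] at this
  have hsum2 : ∑ p ∈ B.offDiag \ A.offDiag, K p.1 p.2 + ∑ p ∈ A.offDiag, K p.1 p.2
      = ∑ p ∈ B.offDiag, K p.1 p.2 := Finset.sum_sdiff hsub
  have hle : ∀ n : ℕ, n ≤ n * n := fun n => by nlinarith
  have hoff : ∀ S : Finset V, (S.offDiag.card : ℝ) = S.card * S.card - S.card := by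
    intro S
    rw [Finset.offDiag_card, Nat.cast_sub (hle S.card)]
    push_cast; ring
  have hcarddiff : ((B.offDiag \ A.offDiag).card : ℝ)
      = ((B.card : ℝ) * B.card - B.card) - ((A.card : ℝ) * A.card - A.card) := by
    rw [Finset.card_sdiff_of_subset hsub, Nat.cast_sub (Finset.card_le_card hsub), hoff, hoff]
  have h2 : ∑ p ∈ B.offDiag \ A.offDiag, K p.1 p.2
      ≤ ((B.card : ℝ) * B.card - B.card) - ((A.card : ℝ) * A.card - A.card) := by
    calc ∑ p ∈ B.offDiag \ A.offDiag, K p.1 p.2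
        ≤ ∑ _p ∈ B.offDiag \ A.offDiag, (1 : ℝ) :=
          Finset.sum_le_sum (fun p _ => hK1 p.1 p.2)
      _ = ((B.offDiag \ A.offDiag).card : ℝ) := by simp
      _ = _ := hcarddiff
  have h2' : 0 ≤ ∑ p ∈ B.offDiag \ A.offDiag, K p.1 p.2 :=
    Finset.sum_nonneg (fun p _ => hK0 p.1 p.2)
  have hαM : 0 ≤ α / M := div_nonneg hα0 hM.le
  have hA : (A.card : ℝ) ≤ B.card := by exact_mod_cast hcard
  have key : F A - F B ≤ ((B.card : ℝ) - A.card) * (α - 1) := by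
    rw [hF A, hF B]
    have expand : F A - F B = F A - F B := rfl
    -- rewrite F A - F B
    have : (∑ i ∈ A, (ℓ i + 1)) - (α / M) * ((∑ p ∈ A.offDiag, K p.1 p.2) / 2)
        - ((∑ i ∈ B, (ℓ i + 1)) - (α / M) * ((∑ p ∈ B.offDiag, K p.1 p.2) / 2))
        = -(∑ i ∈ B \ A, (ℓ i + 1))
          + (α / M) * ((∑ p ∈ B.offDiag \ A.offDiag, K p.1 p.2) / 2) := by
      rw [← hsum1, ← hsum2]; ring
    rw [this]
    have hT : (α / M) * ((∑ p ∈ B.offDiag \ A.offDiag, K p.1 p.2) / 2)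
        ≤ α * ((B.card : ℝ) - A.card) := by
      have hb : (∑ p ∈ B.offDiag \ A.offDiag, K p.1 p.2) / 2
          ≤ ((B.card : ℝ) - A.card) * M := by
        have : ((B.card : ℝ) * B.card - B.card) - ((A.card : ℝ) * A.card - A.card)
            = ((B.card : ℝ) - A.card) * ((B.card : ℝ) + A.card - 1) := by ring
        nlinarith [h2, hA, hB]
      calc (α / M) * ((∑ p ∈ B.offDiag \ A.offDiag, K p.1 p.2) / 2)
          ≤ (α / M) * (((B.card : ℝ) - A.card) * M) := by
            exact mul_le_mul_of_nonneg_left hb hαM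
        _ = α * ((B.card : ℝ) - A.card) := by field_simp
    nlinarith [h1, hT]
  refine ⟨key, le_trans key ?_⟩
  nlinarith [hA]
end

section
/- (Nemhauser–Wolsey–Fisher greedy bound) Let f be a monotone, non-negative, submodular set function on a finite ground set V with f(∅) = 0, let b ≥ 1 be a natural number, and let S₀ = ∅, S₁, …, S_b be a greedy sequence: for each i < b there is x_i ∉ S_i with S_{i+1} = S_i ∪ {x_i} and f(S_i ∪ {x_i}) ≥ f(S_i ∪ {y}) for every y ∈ V. Then for every finite subset T ⊆ V with |T| ≤ b, f(S_b) ≥ (1 − 1/e) · f(T). -/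
/-!
Write `g i = f T - f (S i)` for the gap to the comparison set. Submodularity bounds `f T` by
`f (S i)` plus the sum of the marginal gains of the elements of `T` over `S i`, each of which
is at most the greedy gain, so `g i ≤ b · (f (S (i+1)) - f (S i)) = b · (g i - g (i+1))`.
Hence `g (i+1) ≤ (1 - 1/b) · g i`, so `g b ≤ (1 - 1/b)^b · f T ≤ f T / e`.
-/

open Finset

theorem sub_le_one_sub_inv_mul {a u v c : ℝ} (hc : 0 < c) (h : a - u ≤ c * (v - u)) :
    a - v ≤ (1 - 1 / c) * (a - u) := by
  have : (a - u) / c ≤ v - u := by rwa [div_le_iff₀ hc, mul_comm]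
  have hexp : (1 - 1 / c) * (a - u) = (a - u) - (a - u) / c := by ring
  linarith

section Submodular

variable {V : Type*} [DecidableEq V] {f : Finset V → ℝ}

theorem le_add_sum_marginal
    (hsubmod : ∀ A B : Finset V, A ⊆ B → ∀ x ∉ B,
      f (insert x A) - f A ≥ f (insert x B) - f B)
    (A T : Finset V) :
    f (A ∪ T) ≤ f A + ∑ y ∈ T, (f (insert y A) - f A) := by
  induction T using Finset.induction_on with
  | empty => simp
  | insert a T haT ih =>
    rw [sum_insert haT, union_insert]
    by_cases ha : a ∈ A ∪ T
    · have haA : a ∈ A := (mem_union.mp ha).resolve_right haT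
      rw [insert_eq_self.mpr ha, insert_eq_self.mpr haA]
      linarith
    · linarith [hsubmod A (A ∪ T) subset_union_left a ha]

theorem sub_le_card_mul_of_forall_insert_le
    (hmono : ∀ A B : Finset V, A ⊆ B → f A ≤ f B)
    (hsubmod : ∀ A B : Finset V, A ⊆ B → ∀ x ∉ B,
      f (insert x A) - f A ≥ f (insert x B) - f B)
    {A A' : Finset V} (hbest : ∀ y, f (insert y A) ≤ f A') (T : Finset V) :
    f T - f A ≤ #T * (f A' - f A) := by
  have hsum : ∑ y ∈ T, (f (insert y A) - f A) ≤ #T * (f A' - f A) :=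
    calc ∑ y ∈ T, (f (insert y A) - f A)
        _ ≤ ∑ _y ∈ T, (f A' - f A) := sum_le_sum fun y _ ↦ sub_le_sub_right (hbest y) (f A)
        _ = #T * (f A' - f A) := by rw [sum_const, nsmul_eq_mul]
  linarith [hmono T (A ∪ T) subset_union_right, le_add_sum_marginal hsubmod A T]

theorem greedy_gap_le_pow
    (hmono : ∀ A B : Finset V, A ⊆ B → f A ≤ f B)
    (hsubmod : ∀ A B : Finset V, A ⊆ B → ∀ x ∉ B,
      f (insert x A) - f A ≥ f (insert x B) - f B)
    (hempty : f ∅ = 0) {b : ℕ} (hb : 1 ≤ b) {S : ℕ → Finset V} {x : ℕ → V}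
    (hS0 : S 0 = ∅)
    (hgreedy : ∀ i < b, S (i + 1) = insert (x i) (S i) ∧
      ∀ y : V, f (insert (x i) (S i)) ≥ f (insert y (S i)))
    {T : Finset V} (hT : #T ≤ b) :
    ∀ i ≤ b, f T - f (S i) ≤ (1 - 1 / b) ^ i * f T := by
  have hbpos : (0 : ℝ) < b := by exact_mod_cast hb
  have hr : (0 : ℝ) ≤ 1 - 1 / b :=
    sub_nonneg.mpr (div_le_one_of_le₀ (by exact_mod_cast hb) hbpos.le)
  intro i hi
  induction i with
  | zero => simp [hS0, hempty]
  | succ i ih =>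
    obtain ⟨hSsucc, hbest⟩ := hgreedy i hi
    rw [← hSsucc] at hbest
    have hgain : 0 ≤ f (S (i + 1)) - f (S i) :=
      sub_nonneg.mpr (hmono _ _ (hSsucc ▸ subset_insert _ _))
    have hgap : f T - f (S i) ≤ b * (f (S (i + 1)) - f (S i)) :=
      (sub_le_card_mul_of_forall_insert_le hmono hsubmod hbest T).trans
        (mul_le_mul_of_nonneg_right (by exact_mod_cast hT) hgain)
    calc f T - f (S (i + 1))
        _ ≤ (1 - 1 / b) * (f T - f (S i)) := sub_le_one_sub_inv_mul hbpos hgap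
        _ ≤ (1 - 1 / b) * ((1 - 1 / b) ^ i * f T) :=
          mul_le_mul_of_nonneg_left (ih (Nat.le_of_succ_le hi)) hr
        _ = (1 - 1 / b) ^ (i + 1) * f T := by ring

end Submodular

theorem greedy_submodular_bound_general {V : Type*} [DecidableEq V]
    (f : Finset V → ℝ)
    (hmono : ∀ A B : Finset V, A ⊆ B → f A ≤ f B)
    (hsubmod : ∀ A B : Finset V, A ⊆ B → ∀ x ∉ B,
      f (insert x A) - f A ≥ f (insert x B) - f B)
    (hempty : f ∅ = 0)
    (b : ℕ) (hb : 1 ≤ b)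
    (S : ℕ → Finset V) (x : ℕ → V)
    (hS0 : S 0 = ∅)
    (hgreedy : ∀ i < b, x i ∉ S i ∧ S (i + 1) = insert (x i) (S i) ∧
      ∀ y : V, f (insert (x i) (S i)) ≥ f (insert y (S i)))
    (T : Finset V) (hT : T.card ≤ b) :
    f (S b) ≥ (1 - 1 / Real.exp 1) * f T := by
  have hgap := greedy_gap_le_pow hmono hsubmod hempty hb hS0
    (fun i hi ↦ (hgreedy i hi).2) hT b le_rfl
  have hpow : (1 - 1 / (b : ℝ)) ^ b ≤ 1 / Real.exp 1 := by
    simpa [Real.exp_neg] using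
      Real.one_sub_div_pow_le_exp_neg (n := b) (t := 1) (by exact_mod_cast hb)
  have hfT : 0 ≤ f T := hempty ▸ hmono ∅ T (empty_subset T)
  linarith [mul_le_mul_of_nonneg_right hpow hfT]

/-- **Nemhauser–Wolsey–Fisher greedy bound.**
Let `f` be a monotone, non-negative, submodular set function on a finite ground
set `V` with `f ∅ = 0`, let `b ≥ 1`, and let `S 0 = ∅, S 1, …, S b` be a greedy
sequence: for each `i < b` there is `x i ∉ S i` with `S (i+1) = S i ∪ {x i}` and
`f (S i ∪ {x i}) ≥ f (S i ∪ {y})` for every `y ∈ V`.  Then for every finite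
`T ⊆ V` with `|T| ≤ b`, `f (S b) ≥ (1 − 1/e) · f T`. -/
theorem greedy_submodular_bound {V : Type*} [Fintype V] [DecidableEq V]
    (f : Finset V → ℝ)
    (hmono : ∀ A B : Finset V, A ⊆ B → f A ≤ f B)
    (hnonneg : ∀ S : Finset V, 0 ≤ f S)
    (hsubmod : ∀ A B : Finset V, A ⊆ B → ∀ x ∉ B,
      f (insert x A) - f A ≥ f (insert x B) - f B)
    (hempty : f ∅ = 0)
    (b : ℕ) (hb : 1 ≤ b)
    (S : ℕ → Finset V) (x : ℕ → V)
    (hS0 : S 0 = ∅)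
    (hgreedy : ∀ i < b, x i ∉ S i ∧ S (i + 1) = insert (x i) (S i) ∧
      ∀ y : V, f (insert (x i) (S i)) ≥ f (insert y (S i)))
    (T : Finset V) (hT : T.card ≤ b) :
    f (S b) ≥ (1 - 1 / Real.exp 1) * f T :=
  greedy_submodular_bound_general f hmono hsubmod hempty b hb S x hS0 hgreedy T hT
end

section
/- Let f be a monotone submodular set function on a finite ground set V, let S, T ⊆ V be finite subsets with T nonempty, and let x* ∈ V be an element maximizing the marginal gain, i.e. f(S ∪ {x*}) ≥ f(S ∪ {y}) for every y ∈ V. Then f(S ∪ {x*}) − f(S) ≥ (f(T) − f(S)) / |T|. -/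
/-! Adding the elements of `T` to `S` one at a time, submodularity bounds each increment by the
singleton gain over `S`, so `f T - f S ≤ f (S ∪ T) - f S` is at most the sum of the `|T|` singleton
gains, each of which is at most the greedy gain of `x*`. -/

open Finset

section MarginalGain

variable {V β : Type*} [DecidableEq V] [AddCommGroup β] [PartialOrder β] [IsOrderedAddMonoid β]
  {f : Finset V → β}

theorem sub_le_sum_insert_sub_of_submodular
    (hsubmod : ∀ A B : Finset V, A ⊆ B → ∀ x ∉ B, f (insert x A) - f A ≥ f (insert x B) - f B)
    (S U : Finset V) : f (S ∪ U) - f S ≤ ∑ y ∈ U, (f (insert y S) - f S) := by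
  induction U using Finset.induction_on with
  | empty => simp
  | insert a U haU ih =>
    have hstep : f (S ∪ insert a U) - f (S ∪ U) ≤ f (insert a S) - f S := by
      rw [union_insert]
      by_cases haSU : a ∈ S ∪ U
      · -- `a ∉ U`, so `a ∈ S` and both sides vanish
        have haS : a ∈ S := by simpa [haU] using haSU
        simp [insert_eq_of_mem haSU, insert_eq_of_mem haS]
      · exact hsubmod S (S ∪ U) subset_union_left a haSU
    rw [sum_insert haU]
    calc f (S ∪ insert a U) - f S
        = (f (S ∪ insert a U) - f (S ∪ U)) + (f (S ∪ U) - f S) := by abel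
      _ ≤ (f (insert a S) - f S) + ∑ y ∈ U, (f (insert y S) - f S) := add_le_add hstep ih

theorem sub_le_sum_insert_sub_of_monotone_submodular
    (hmono : ∀ A B : Finset V, A ⊆ B → f A ≤ f B)
    (hsubmod : ∀ A B : Finset V, A ⊆ B → ∀ x ∉ B, f (insert x A) - f A ≥ f (insert x B) - f B)
    (S T : Finset V) : f T - f S ≤ ∑ y ∈ T, (f (insert y S) - f S) :=
  (sub_le_sub_right (hmono T (S ∪ T) subset_union_right) _).trans
    (sub_le_sum_insert_sub_of_submodular hsubmod S T)

end MarginalGain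

theorem greedy_marginal_gain_bound_general {V : Type*} [DecidableEq V]
    (f : Finset V → ℝ)
    (hmono : ∀ A B : Finset V, A ⊆ B → f A ≤ f B)
    (hsubmod : ∀ A B : Finset V, A ⊆ B → ∀ x ∉ B,
      f (insert x A) - f A ≥ f (insert x B) - f B)
    (S T : Finset V)
    (xstar : V) (hx : ∀ y : V, f (insert xstar S) ≥ f (insert y S)) :
    f (insert xstar S) - f S ≥ (f T - f S) / (T.card : ℝ) := by
  have hgain_nonneg : 0 ≤ f (insert xstar S) - f S :=
    sub_nonneg.mpr (hmono S _ (subset_insert xstar S))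
  have hsum : f T - f S ≤ (f (insert xstar S) - f S) * T.card :=
    calc f T - f S ≤ ∑ y ∈ T, (f (insert y S) - f S) :=
          sub_le_sum_insert_sub_of_monotone_submodular hmono hsubmod S T
      _ ≤ ∑ _y ∈ T, (f (insert xstar S) - f S) :=
          sum_le_sum fun y _ => sub_le_sub_right (hx y) _
      _ = (f (insert xstar S) - f S) * T.card := by rw [sum_const, nsmul_eq_mul, mul_comm]
  exact div_le_of_le_mul₀ (Nat.cast_nonneg _) hgain_nonneg hsum

/-- **Greedy marginal-gain lower bound.**
Let `f` be a monotone submodular set function on a finite ground set `V`, let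
`S, T ⊆ V` be finite subsets with `T` nonempty, and let `x*` maximize the
marginal gain: `f (S ∪ {x*}) ≥ f (S ∪ {y})` for every `y ∈ V`.  Then
`f (S ∪ {x*}) − f S ≥ (f T − f S) / |T|`. -/
theorem greedy_marginal_gain_bound {V : Type*} [Fintype V] [DecidableEq V]
    (f : Finset V → ℝ)
    (hmono : ∀ A B : Finset V, A ⊆ B → f A ≤ f B)
    (hsubmod : ∀ A B : Finset V, A ⊆ B → ∀ x ∉ B,
      f (insert x A) - f A ≥ f (insert x B) - f B)
    (S T : Finset V) (hT : T.Nonempty)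
    (xstar : V) (hx : ∀ y : V, f (insert xstar S) ≥ f (insert y S)) :
    f (insert xstar S) - f S ≥ (f T - f S) / (T.card : ℝ) :=
  greedy_marginal_gain_bound_general f hmono hsubmod S T xstar hx
end
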